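/- arXiv:1512.02071 — 6 statements merged into one kernel-verified Lean document; each statement's English description precedes it below -/
import Mathlib

section
/- Suppose μ, ν, μ*, ν* and δ* are nonzero complex numbers with |μ| = |ν| = 1, μ*ν* = δ*, |δ*| = 1, |μ*/ν*| ≠ 1, and δ* is not a root of unity. If for all integers k, l the equality μ^k ν^l = 1 implies μ*^k ν*^l = 1, then μ^k ν^l = 1 only for (k,l) = (0,0); that is, (μ,ν) are multiplicatively independent. -/
/-!
Taking norms in `μs ^ k * νs ^ l = 1` and using `‖μs‖ * ‖νs‖ = 1` gives `‖μs‖ ^ (k - l) = 1`;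
since `‖μs / νs‖ = ‖μs‖ ^ 2 ≠ 1`, this forces `k = l`. Then `δs ^ k = (μs * νs) ^ k = 1`, and as
`δs` is not a root of unity, `k = 0`.
-/

lemma pow_natAbs_eq_one_of_zpow_eq_one {α : Type*} [DivisionMonoid α] {a : α} {n : ℤ}
    (h : a ^ n = 1) : a ^ n.natAbs = 1 := by
  cases n <;> simp_all

lemma eq_zero_of_zpow_eq_one_of_not_root_of_unity {α : Type*} [DivisionMonoid α] {a : α}
    (ha : ∀ n : ℕ, 0 < n → a ^ n ≠ 1) {k : ℤ} (hk : a ^ k = 1) : k = 0 := by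
  by_contra hk0
  exact ha k.natAbs (Int.natAbs_pos.mpr hk0) (pow_natAbs_eq_one_of_zpow_eq_one hk)

lemma eq_of_zpow_mul_zpow_eq_one {K : Type*} [NormedField K] {z w : K}
    (hzw : ‖z * w‖ = 1) (hratio : ‖z / w‖ ≠ 1) {k l : ℤ} (h : z ^ k * w ^ l = 1) : k = l := by
  have hw : ‖w‖ = ‖z‖⁻¹ := by
    rw [norm_mul] at hzw
    exact eq_inv_of_mul_eq_one_right hzw
  have hz0 : 0 < ‖z‖ := by
    rcases (norm_nonneg z).lt_or_eq with hz | hz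
    · exact hz
    · simp [← hz] at hzw
  have hz1 : ‖z‖ ≠ 1 := by
    intro hz
    simp [norm_div, hw, hz] at hratio
  have hnorm : ‖z‖ ^ (k - l) = 1 := by
    have := congrArg norm h
    rwa [norm_mul, norm_zpow, norm_zpow, hw, inv_zpow', ← zpow_add₀ hz0.ne', norm_one,
      ← sub_eq_add_neg] at this
  exact sub_eq_zero.mp ((zpow_eq_one_iff_right₀ hz0.le hz1).mp hnorm)

theorem stmt_1_general (μ ν μs νs δs : ℂ)
    (hprod : μs * νs = δs) (hδ : ‖δs‖ = 1)
    (hratio : ‖μs / νs‖ ≠ 1)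
    (hroot : ∀ n : ℕ, 0 < n → δs ^ n ≠ 1)
    (hgal : ∀ k l : ℤ, μ ^ k * ν ^ l = 1 → μs ^ k * νs ^ l = 1) :
    ∀ k l : ℤ, μ ^ k * ν ^ l = 1 → k = 0 ∧ l = 0 := by
  intro k l hkl
  have hs := hgal k l hkl
  obtain rfl : k = l := eq_of_zpow_mul_zpow_eq_one (hprod ▸ hδ) hratio hs
  have hδk : δs ^ k = 1 := by rw [← hprod, mul_zpow, hs]
  have hk0 := eq_zero_of_zpow_eq_one_of_not_root_of_unity hroot hδk
  exact ⟨hk0, hk0⟩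

theorem stmt_1 (μ ν μs νs δs : ℂ)
    (hμ : ‖μ‖ = 1) (hν : ‖ν‖ = 1)
    (hprod : μs * νs = δs) (hδ : ‖δs‖ = 1)
    (hratio : ‖μs / νs‖ ≠ 1)
    (hroot : ∀ n : ℕ, 0 < n → δs ^ n ≠ 1)
    (hgal : ∀ k l : ℤ, μ ^ k * ν ^ l = 1 → μs ^ k * νs ^ l = 1) :
    ∀ k l : ℤ, μ ^ k * ν ^ l = 1 → k = 0 ∧ l = 0 :=
  stmt_1_general μ ν μs νs δs hprod hδ hratio hroot hgal
end

section
/- The polynomial S(δ) = δ^8 − 2δ^7 + δ^6 − 2δ^5 + δ^4 − 2δ^3 + δ^2 − 2δ + 1 has exactly two real roots, one in the interval (1.993, 1.995) and one in (0.501, 0.502), and all its other roots lie on the unit circle. -/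
/-- The Salem polynomial `S(δ) = δ^8 − 2δ^7 + δ^6 − 2δ^5 + δ^4 − 2δ^3 + δ^2 − 2δ + 1`. -/
noncomputable def salemS (δ : ℂ) : ℂ :=
  δ^8 - 2*δ^7 + δ^6 - 2*δ^5 + δ^4 - 2*δ^3 + δ^2 - 2*δ + 1

/-!
Since `S` is palindromic, `S(z) = z⁴ T(z + z⁻¹)` for the trace polynomial
`T(t) = t⁴ - 2t³ - 3t² + 4t + 1` (`salemTrace`).
Sign changes give a root `x ∈ (1.993, 1.995)` of `t ↦ T(t + t⁻¹)` and three roots of `T`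
in `(-2, 2)`; together with `x + x⁻¹ > 2` these are all four roots of `T`. So every root `z`
of `S` has `z + z⁻¹ = t` for one of these real `t`. A real `z` has `|z + z⁻¹| ≥ 2`, which
forces `t = x + x⁻¹` and `z ∈ {x, x⁻¹}`; a non-real `z` with `z + z⁻¹` real has `|z| = 1`.
-/

open Polynomial Set

theorem Polynomial.mem_of_isRoot_of_natDegree_le_card {R : Type*} [CommRing R] [IsDomain R]
    {p : R[X]} (hp : p ≠ 0) {s : Finset R} (hs : ∀ t ∈ s, p.IsRoot t)
    (hcard : p.natDegree ≤ s.card) {w : R} (hw : p.IsRoot w) : w ∈ s := by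
  have hle : s.val ≤ p.roots :=
    (Multiset.le_iff_subset s.nodup).mpr fun t ht => (mem_roots hp).mpr (hs t ht)
  have heq : s.val = p.roots := Multiset.eq_of_le_of_card_le hle ((card_roots' p).trans hcard)
  rw [← Finset.mem_val, heq, mem_roots hp]
  exact hw

theorem exists_mem_Ioo_eq_zero_of_mul_neg {f : ℝ → ℝ} {a b : ℝ} (hab : a ≤ b)
    (hf : ContinuousOn f (Icc a b)) (h : f a * f b < 0) : ∃ c ∈ Ioo a b, f c = 0 := by
  rcases mul_neg_iff.mp h with ⟨ha, hb⟩ | ⟨ha, hb⟩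
  · exact intermediate_value_Ioo' hab hf ⟨hb, ha⟩
  · exact intermediate_value_Ioo hab hf ⟨ha, hb⟩

theorem two_le_abs_add_inv {r : ℝ} (hr : r ≠ 0) : 2 ≤ |r + r⁻¹| := by
  have h : (r + r⁻¹)^2 - 2^2 = (r - r⁻¹)^2 := by field_simp; ring
  simpa using sq_le_sq.mp (by linarith [h, sq_nonneg (r - r⁻¹)] : (2:ℝ)^2 ≤ (r + r⁻¹)^2)

theorem eq_or_eq_inv_of_add_inv_eq {K : Type*} [Field K] {r x : K} (hr : r ≠ 0) (hx : x ≠ 0)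
    (h : r + r⁻¹ = x + x⁻¹) : r = x ∨ r = x⁻¹ := by
  have : (r - x) * (r - x⁻¹) = 0 := by
    field_simp at h ⊢
    linear_combination h
  simpa [sub_eq_zero] using this

theorem Complex.norm_eq_one_of_add_inv_eq_ofReal {z : ℂ} {t : ℝ} (hz : z.im ≠ 0)
    (h : z + z⁻¹ = t) : ‖z‖ = 1 := by
  have hn : normSq z ≠ 0 := fun h0 => hz (by simp [normSq_eq_zero.mp h0])
  have him : z.im * (normSq z - 1) = 0 := by
    have := congrArg im h
    rw [add_im, inv_im, ofReal_im] at this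
    field_simp at this
    linear_combination this
  have hn1 : normSq z = 1 := sub_eq_zero.mp ((mul_eq_zero.mp him).resolve_left hz)
  rw [norm_def, hn1, Real.sqrt_one]

def salemTrace {R : Type*} [CommRing R] (t : R) : R := t^4 - 2*t^3 - 3*t^2 + 4*t + 1

@[simp, norm_cast]
theorem Complex.ofReal_salemTrace (t : ℝ) : ((salemTrace t : ℝ) : ℂ) = salemTrace (t : ℂ) := by
  simp [salemTrace]

theorem continuous_salemTrace : Continuous (salemTrace : ℝ → ℝ) := by
  unfold salemTrace; fun_prop

theorem exists_salemTrace_eq_zero {a b : ℝ} (hab : a ≤ b)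
    (h : salemTrace a * salemTrace b < 0) : ∃ t ∈ Ioo a b, salemTrace t = 0 :=
  exists_mem_Ioo_eq_zero_of_mul_neg hab continuous_salemTrace.continuousOn h

theorem exists_salemTrace_add_inv_eq_zero :
    ∃ x ∈ Ioo (1.993 : ℝ) 1.995, salemTrace (x + x⁻¹) = 0 := by
  refine exists_mem_Ioo_eq_zero_of_mul_neg (by norm_num)
    (continuous_salemTrace.comp_continuousOn ?_) (by norm_num [salemTrace])
  exact continuousOn_id.add (continuousOn_inv₀.mono fun t ht => by
    simp only [mem_compl_iff, mem_singleton_iff]; linarith [ht.1])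

theorem mem_of_salemTrace_eq_zero {s : Finset ℂ} (hs : ∀ t ∈ s, salemTrace t = 0)
    (hcard : 4 ≤ s.card) {w : ℂ} (hw : salemTrace w = 0) : w ∈ s := by
  set p : ℂ[X] := X^4 - C 2 * X^3 - C 3 * X^2 + C 4 * X + 1
  have hp : p.natDegree = 4 := by unfold p; compute_degree!
  have heval : ∀ t, p.eval t = salemTrace t := fun t => by simp [p, salemTrace]
  refine p.mem_of_isRoot_of_natDegree_le_card (ne_zero_of_natDegree_gt (n := 0) (by omega))
    (fun t ht => ?_) (hp ▸ hcard) ?_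
  · rw [IsRoot, heval, hs t ht]
  · rw [IsRoot, heval, hw]

theorem salemS_eq_pow_mul_salemTrace {z : ℂ} (hz : z ≠ 0) :
    salemS z = z^4 * salemTrace (z + z⁻¹) := by
  unfold salemS salemTrace
  field_simp
  ring

theorem salemS_eq_zero_iff {z : ℂ} : salemS z = 0 ↔ z ≠ 0 ∧ salemTrace (z + z⁻¹) = 0 := by
  by_cases hz : z = 0
  · simp [hz, salemS]
  · simp [salemS_eq_pow_mul_salemTrace hz, hz]

theorem salemS_ofReal_eq_zero {r : ℝ} (hr : r ≠ 0) (h : salemTrace (r + r⁻¹) = 0) :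
    salemS r = 0 :=
  salemS_eq_zero_iff.mpr ⟨by exact_mod_cast hr, by exact_mod_cast h⟩

theorem exists_add_inv_eq_of_salemS_eq_zero {T : Finset ℝ} (hT : ∀ t ∈ T, salemTrace t = 0)
    (hcard : T.card = 4) {z : ℂ} (hz : salemS z = 0) : z ≠ 0 ∧ ∃ t ∈ T, z + z⁻¹ = t := by
  obtain ⟨hz₀, hzT⟩ := salemS_eq_zero_iff.mp hz
  refine ⟨hz₀, ?_⟩
  have hmem := mem_of_salemTrace_eq_zero (s := T.image (↑)) ?_ ?_ hzT
  · simpa [eq_comm] using hmem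
  · simpa using fun t ht => by exact_mod_cast hT t ht
  · rw [Finset.card_image_of_injective _ Complex.ofReal_injective, hcard]

theorem stmt_2 :
    ∃ x y : ℝ, x ∈ Set.Ioo (1.993 : ℝ) 1.995 ∧ y ∈ Set.Ioo (0.501 : ℝ) 0.502 ∧
      salemS (x : ℂ) = 0 ∧ salemS (y : ℂ) = 0 ∧
      (∀ r : ℝ, salemS (r : ℂ) = 0 → r = x ∨ r = y) ∧
      (∀ z : ℂ, salemS z = 0 → (∀ r : ℝ, z ≠ (r : ℂ)) → ‖z‖ = 1) := by
  obtain ⟨x, ⟨hx₁, hx₂⟩, hx⟩ := exists_salemTrace_add_inv_eq_zero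
  obtain ⟨t₁, ⟨ht₁, ht₁'⟩, hT₁⟩ :=
    exists_salemTrace_eq_zero (a := -2) (b := -1) (by norm_num) (by norm_num [salemTrace])
  obtain ⟨t₂, ⟨ht₂, ht₂'⟩, hT₂⟩ :=
    exists_salemTrace_eq_zero (a := -1) (b := 0) (by norm_num) (by norm_num [salemTrace])
  obtain ⟨t₃, ⟨ht₃, ht₃'⟩, hT₃⟩ :=
    exists_salemTrace_eq_zero (a := 1) (b := 2) (by norm_num) (by norm_num [salemTrace])
  have hx₀ : 0 < x := by linarith
  have hy : x⁻¹ ∈ Ioo (0.501 : ℝ) 0.502 := by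
    constructor
    · rw [lt_inv_comm₀ (by norm_num) hx₀]; norm_num; linarith
    · rw [inv_lt_comm₀ hx₀ (by norm_num)]; norm_num; linarith
  set T : Finset ℝ := {x + x⁻¹, t₁, t₂, t₃}
  have hT : T.card = 4 :=
    Finset.card_eq_four.mpr ⟨_, _, _, _, by linarith [hy.1], by linarith [hy.1],
      by linarith [hy.1], by linarith, by linarith, by linarith, rfl⟩
  have hroot (z : ℂ) (hz : salemS z = 0) : z ≠ 0 ∧ ∃ t ∈ T, z + z⁻¹ = t :=
    exists_add_inv_eq_of_salemS_eq_zero (by simp [T, hx, hT₁, hT₂, hT₃]) hT hz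
  refine ⟨x, x⁻¹, ⟨hx₁, hx₂⟩, hy, salemS_ofReal_eq_zero hx₀.ne' hx,
    salemS_ofReal_eq_zero (inv_ne_zero hx₀.ne') (by rwa [inv_inv, add_comm]), ?_, ?_⟩
  · intro r hr
    obtain ⟨hr₀, t, ht, hrt⟩ := hroot r hr
    have hr₀ : r ≠ 0 := by exact_mod_cast hr₀
    have hrt : r + r⁻¹ = t := by exact_mod_cast hrt
    have h2 := two_le_abs_add_inv hr₀
    simp only [T, Finset.mem_insert, Finset.mem_singleton] at ht
    rcases ht with rfl | rfl | rfl | rfl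
    · exact eq_or_eq_inv_of_add_inv_eq hr₀ hx₀.ne' hrt
    all_goals exact absurd h2 (not_le.mpr (abs_lt.mpr ⟨by linarith, by linarith⟩))
  · intro z hz hnr
    obtain ⟨-, t, -, hzt⟩ := hroot z hz
    exact Complex.norm_eq_one_of_add_inv_eq_ofReal (fun him => hnr z.re (Complex.ext rfl
      (by simpa using him))) hzt
end

section
/- Let δ = exp(2πiν) with ν an irrational real number. Then the set {a_k(δ) : k ∈ ℕ} is dense in ℝ, where a_k(δ) := −(δ^3−1)(δ^{3k−1}+1)/(δ(δ^{3k}−1)); and similarly the set {b_k(δ) : k ∈ ℕ} with b_k(δ) := (δ^3−1)(δ^{3k+1}+1)/(δ^2(δ^{3k}−1)) is dense in ℝ. -/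
/-!
Write `δ = e^{2iθ}` with `θ = πν`. Expanding in powers of `e^{iθ}` shows that
`a_k(δ) = p cot (3kθ) + q` and `b_k(δ) = -p cot (3kθ) + q` with the real constants
`p = -2 sin 3θ cos θ ≠ 0` and `q = -2 sin 3θ sin θ`. Since `3ν` is irrational, the angles
`3kθ` (`k ≥ 1`) are dense modulo `π`, while `φ ↦ ±p cot φ + q` is `π`-periodic and maps
`(0, π)` continuously onto `ℝ`; so both sequences are dense.
-/

open Function Real

theorem Function.Periodic.exists_nat_mul_mem_image {X : Type*} {f : ℝ → X} {c α : ℝ}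
    (hf : Periodic f c) (hc : 0 < c) (hα : Irrational (α / c)) {U : Set ℝ} (hU : IsOpen U)
    (hne : U.Nonempty) : ∃ k : ℕ, 0 < k ∧ f (k * α) ∈ f '' U := by
  have : Fact (0 < c) := ⟨hc⟩
  have hdense : DenseRange fun n : ℕ => n • (α : AddCircle c) :=
    denseRange_zsmul_iff_nsmul.1 (AddCircle.denseRange_zsmul_coe_iff.2 hα)
  -- Translating by `α` drops `k = 0` from the orbit without losing density.
  have hshift : DenseRange fun n : ℕ => (n + 1) • (α : AddCircle c) := by
    simpa [Function.comp_def, succ_nsmul'] using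
      (add_left_surjective (α : AddCircle c)).denseRange.comp hdense (continuous_const_add _)
  obtain ⟨n, φ, hφU, hφ⟩ := hshift.exists_mem_open
    (QuotientAddGroup.isOpenMap_coe U hU) (hne.image _)
  obtain ⟨m, hm⟩ : ∃ m : ℤ, m • c = ((n + 1 : ℕ) : ℝ) * α - φ := by
    rw [← AddCircle.coe_eq_zero_iff, AddCircle.coe_sub, hφ, ← nsmul_eq_mul,
      AddCircle.coe_nsmul, sub_self]
  refine ⟨n + 1, n.succ_pos, φ, hφU, ?_⟩
  rw [eq_sub_iff_add_eq', zsmul_eq_mul] at hm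
  rw [← hm, hf.int_mul m]

theorem Real.cot_periodic : Periodic cot π := by
  simpa only [Function.comp_def, tan_inv_eq_cot] using tan_periodic.comp Inv.inv

theorem Real.cot_pi_div_two_sub (x : ℝ) : cot (π / 2 - x) = tan x := by
  rw [cot_eq_cos_div_sin, cos_pi_div_two_sub, sin_pi_div_two_sub, tan_eq_sin_div_cos]

theorem Real.continuousOn_cot : ContinuousOn cot {x | sin x ≠ 0} := by
  rw [show cot = fun x => cos x / sin x from funext cot_eq_cos_div_sin]
  exact continuous_cos.continuousOn.div continuous_sin.continuousOn fun _ hx => hx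

theorem dense_setOf_mul_cot_nat_mul_add {p q α : ℝ} (hp : p ≠ 0) (hα : Irrational (α / π)) :
    Dense {x : ℝ | ∃ k : ℕ, 0 < k ∧ x = p * cot (k * α) + q} := by
  set g : ℝ → ℝ := fun φ => p * cot φ + q
  refine dense_iff_inter_open.2 fun W hW ⟨y, hy⟩ => ?_
  have hg : ContinuousOn g {φ | sin φ ≠ 0} :=
    (continuousOn_const.mul continuousOn_cot).add continuousOn_const
  have hne : ({φ | sin φ ≠ 0} ∩ g ⁻¹' W).Nonempty := by
    refine ⟨π / 2 - arctan ((y - q) / p), ?_, ?_⟩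
    · simp only [Set.mem_ofPred_eq, sin_pi_div_two_sub]
      exact (cos_arctan_pos _).ne'
    · simp only [Set.mem_preimage, g, cot_pi_div_two_sub, tan_arctan]
      rwa [mul_div_cancel₀ _ hp, sub_add_cancel]
  obtain ⟨k, hk, φ, hφ, hgφ : g φ = g (k * α)⟩ :=
    (cot_periodic.comp (p * · + q)).exists_nat_mul_mem_image pi_pos hα
      (hg.isOpen_inter_preimage (isOpen_ne_fun continuous_sin continuous_const) hW) hne
  exact ⟨g (k * α), hgφ ▸ hφ.2, k, hk, rfl⟩

theorem Irrational.sin_pi_mul_ne_zero {x : ℝ} (hx : Irrational x) : sin (π * x) ≠ 0 := by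
  rw [Ne, sin_eq_zero_iff]
  rintro ⟨n, hn⟩
  exact hx.ne_int n (mul_left_cancel₀ pi_ne_zero (by rw [← hn, mul_comm])).symm

theorem Irrational.cos_pi_mul_ne_zero {x : ℝ} (hx : Irrational x) : cos (π * x) ≠ 0 := by
  rw [← sin_add_pi_div_two]
  convert (hx.add_ratCast (1 / 2)).sin_pi_mul_ne_zero using 2
  push_cast; ring

namespace Complex

theorem sin_eq_exp_mul_I (θ : ℂ) : sin θ = ((exp (θ * I))⁻¹ - exp (θ * I)) * I / 2 := by
  rw [sin, neg_mul, exp_neg]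

theorem cos_eq_exp_mul_I (θ : ℂ) : cos θ = (exp (θ * I) + (exp (θ * I))⁻¹) / 2 := by
  rw [cos, neg_mul, exp_neg]

theorem sin_three_mul_eq_exp_mul_I (θ : ℂ) :
    sin (3 * θ) = ((exp (θ * I))⁻¹ ^ 3 - exp (θ * I) ^ 3) * I / 2 := by
  rw [sin_eq_exp_mul_I, inv_pow, ← exp_nat_mul]; push_cast; ring_nf

theorem cot_nat_mul (θ : ℂ) (n : ℕ) :
    cot (n * θ) = (exp (θ * I) ^ (2 * n) + 1) / (I * (1 - exp (θ * I) ^ (2 * n))) := by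
  rw [cot_eq_exp_ratio, ← exp_nat_mul]; push_cast; ring_nf

theorem exp_mul_I_pow_ne_one_of_sin_ne_zero {θ : ℂ} {n : ℕ} (hs : sin (n * θ) ≠ 0) :
    exp (θ * I) ^ (2 * n) ≠ 1 := by
  rw [Ne, ← exp_nat_mul, exp_eq_one_iff]
  rintro ⟨j, hj⟩
  refine hs (sin_eq_zero_iff.2 ⟨j, ?_⟩)
  push_cast at hj
  linear_combination (-I / 2) * hj + (n * θ - j * π) * I_sq

theorem exp_two_mul_mul_I (θ : ℂ) : exp (2 * θ * I) = exp (θ * I) ^ 2 := by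
  rw [← exp_nat_mul]; ring_nf

end Complex

open Complex

/-- `a_k(δ)`; note `3 * k - 1` is truncated subtraction, so only `k ≥ 1` is meaningful. -/
noncomputable def seqA (δ : ℂ) (k : ℕ) : ℂ :=
  -(δ ^ 3 - 1) * (δ ^ (3 * k - 1) + 1) / (δ * (δ ^ (3 * k) - 1))

noncomputable def seqB (δ : ℂ) (k : ℕ) : ℂ :=
  (δ ^ 3 - 1) * (δ ^ (3 * k + 1) + 1) / (δ ^ 2 * (δ ^ (3 * k) - 1))

theorem seqA_exp_eq_cot (θ : ℂ) {k : ℕ} (hk : 0 < k) (hs : sin (k * (3 * θ)) ≠ 0) :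
    seqA (exp (2 * θ * I)) k =
      -2 * sin (3 * θ) * cos θ * cot (k * (3 * θ)) + -(2 * sin (3 * θ) * sin θ) := by
  obtain ⟨n, hn⟩ : ∃ n, 3 * k = n + 1 := ⟨3 * k - 1, by omega⟩
  rw [show (k : ℂ) * (3 * θ) = ((n + 1 : ℕ) : ℂ) * θ by rw [← hn]; push_cast; ring] at hs ⊢
  have hW := exp_mul_I_pow_ne_one_of_sin_ne_zero hs
  rw [show 2 * (n + 1) = 2 * n + 2 by ring, pow_add] at hW
  rw [seqA, hn, Nat.add_sub_cancel, cot_nat_mul, exp_two_mul_mul_I, ← pow_mul, ← pow_mul,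
    ← pow_mul, show 2 * (n + 1) = 2 * n + 2 by ring, pow_add]
  rw [sin_three_mul_eq_exp_mul_I, sin_eq_exp_mul_I θ, cos_eq_exp_mul_I θ]
  have hz : exp (θ * I) ≠ 0 := exp_ne_zero _
  generalize exp (θ * I) ^ (2 * n) = w at *
  generalize exp (θ * I) = z at *
  have hw : w * z ^ 2 - 1 ≠ 0 := sub_ne_zero.2 hW
  have hw' : 1 - w * z ^ 2 ≠ 0 := sub_ne_zero.2 hW.symm
  field_simp
  ring_nf
  simp only [I_sq]
  ring

theorem seqB_exp_eq_cot (θ : ℂ) {k : ℕ} (hs : sin (k * (3 * θ)) ≠ 0) :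
    seqB (exp (2 * θ * I)) k =
      2 * sin (3 * θ) * cos θ * cot (k * (3 * θ)) + -(2 * sin (3 * θ) * sin θ) := by
  rw [show (k : ℂ) * (3 * θ) = ((3 * k : ℕ) : ℂ) * θ by push_cast; ring] at hs ⊢
  have hW := exp_mul_I_pow_ne_one_of_sin_ne_zero hs
  rw [seqB, cot_nat_mul, exp_two_mul_mul_I, ← pow_mul, ← pow_mul, ← pow_mul, ← pow_mul,
    show 2 * (3 * k + 1) = 2 + 2 * (3 * k) by omega, pow_add]
  rw [sin_three_mul_eq_exp_mul_I, sin_eq_exp_mul_I θ, cos_eq_exp_mul_I θ]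
  have hz : exp (θ * I) ≠ 0 := exp_ne_zero _
  generalize exp (θ * I) ^ (2 * (3 * k)) = w at *
  generalize exp (θ * I) = z at *
  have hw : w - 1 ≠ 0 := sub_ne_zero.2 hW
  have hw' : 1 - w ≠ 0 := sub_ne_zero.2 hW.symm
  field_simp
  ring_nf
  simp only [I_sq]
  ring

theorem stmt_8 (ν : ℝ) (hν : Irrational ν) (δ : ℂ)
    (hδ : δ = Complex.exp (2 * Real.pi * Complex.I * (ν : ℂ))) :
    Dense {x : ℝ | ∃ k : ℕ, 0 < k ∧
        (x : ℂ) = -(δ^3 - 1) * (δ^(3*k-1) + 1) / (δ * (δ^(3*k) - 1))} ∧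
    Dense {x : ℝ | ∃ k : ℕ, 0 < k ∧
        (x : ℂ) = (δ^3 - 1) * (δ^(3*k+1) + 1) / (δ^2 * (δ^(3*k) - 1))} := by
  set θ : ℝ := π * ν with hθ
  have hδθ : δ = exp (2 * (θ : ℂ) * I) := by rw [hδ, hθ]; push_cast; ring_nf
  have h3ν : Irrational (3 * ν) := hν.natCast_mul (m := 3) three_ne_zero
  have hα : Irrational (3 * θ / π) := by rwa [hθ, mul_div_assoc, mul_div_cancel_left₀ _ pi_ne_zero]
  have hs3 : Real.sin (3 * θ) ≠ 0 := by rw [hθ, mul_left_comm]; exact h3ν.sin_pi_mul_ne_zero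
  have hp : 2 * Real.sin (3 * θ) * Real.cos θ ≠ 0 :=
    mul_ne_zero (mul_ne_zero two_ne_zero hs3) hν.cos_pi_mul_ne_zero
  have hsk (k : ℕ) (hk : 0 < k) : sin (k * (3 * (θ : ℂ))) ≠ 0 := by
    rw [show (k : ℂ) * (3 * θ) = ((π * ((3 * k : ℕ) * ν) : ℝ) : ℂ) by rw [hθ]; push_cast; ring,
      ← ofReal_sin, ofReal_ne_zero]
    exact (hν.natCast_mul (by omega)).sin_pi_mul_ne_zero
  subst hδθ
  constructor
  · refine (dense_setOf_mul_cot_nat_mul_add (p := -2 * Real.sin (3 * θ) * Real.cos θ)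
      (q := -(2 * Real.sin (3 * θ) * Real.sin θ)) (by simpa using hp) hα).mono ?_
    rintro _ ⟨k, hk, rfl⟩
    refine ⟨k, hk, (seqA_exp_eq_cot θ hk (hsk k hk)).trans ?_ |>.symm⟩
    push_cast; ring
  · refine (dense_setOf_mul_cot_nat_mul_add (p := 2 * Real.sin (3 * θ) * Real.cos θ)
      (q := -(2 * Real.sin (3 * θ) * Real.sin θ)) hp hα).mono ?_
    rintro _ ⟨k, hk, rfl⟩
    refine ⟨k, hk, (seqB_exp_eq_cot θ (hsk k hk)).trans ?_ |>.symm⟩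
    push_cast; ring
end

section
/- Let δ, c be complex numbers with δ^3 ≠ 1, set p = δc/(δ^3−1) and h_k(x) = 1/(δ^{3k}(1/x − p) + p). If a ≠ 0 satisfies h_{m−1}(−a/(δ(δ + ca))) = a for an integer m ≥ 1 (with all expressions defined), then 1/a = −δ(δ^{3m}−1)c / ((δ^3−1)(δ^{3m−1}+1)). -/
/-- The Möbius map `h_k(x) = 1/(δ^{3k}(1/x − p) + p)` with `p = δc/(δ³−1)`. -/
noncomputable def moebiusH (δ c : ℂ) (k : ℕ) (x : ℂ) : ℂ :=
  1 / (δ^(3*k) * (1/x - δ*c/(δ^3 - 1)) + δ*c/(δ^3 - 1))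

/-! In the coordinate `1/x − p` the map `h_k` is multiplication by `δ^{3k}`, so the condition
`h_{m−1}(x) = a` with `1/x = −δ(δ + ca)/a` is linear in `1/a`; it is solved using only
`(δ³ − 1) p = δc`. -/

theorem one_div_moebiusH (δ c : ℂ) (k : ℕ) (x : ℂ) :
    1 / moebiusH δ c k x = δ^(3*k) * (1/x - δ*c/(δ^3 - 1)) + δ*c/(δ^3 - 1) :=
  one_div_one_div _

theorem stmt_11_general (δ c a : ℂ) (hδ3 : δ^3 ≠ 1) (ha : a ≠ 0)
    (m : ℕ) (hm : 1 ≤ m) (hpow : δ^(3*m-1) + 1 ≠ 0)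
    (h : moebiusH δ c (m-1) (-a / (δ * (δ + c*a))) = a) :
    1/a = -δ * (δ^(3*m) - 1) * c / ((δ^3 - 1) * (δ^(3*m-1) + 1)) := by
  obtain ⟨n, rfl⟩ := Nat.exists_eq_add_of_le' hm
  rw [show 3 * (n + 1) - 1 = 3 * n + 2 by omega] at hpow ⊢
  rw [Nat.add_sub_cancel] at h
  have hδ3' : δ^3 - 1 ≠ 0 := sub_ne_zero.mpr hδ3
  have hrec : 1/a = δ^(3*n) * (-(δ*(δ + c*a))/a - δ*c/(δ^3 - 1)) + δ*c/(δ^3 - 1) := by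
    conv_lhs => rw [← h]
    rw [one_div_moebiusH, one_div_div, div_neg, neg_div]
  have hp : (δ^3 - 1) * (δ*c/(δ^3 - 1)) = δ*c := mul_div_cancel₀ _ hδ3'
  generalize δ*c/(δ^3 - 1) = p at hrec hp
  have hlin : δ^(3*n+2) + 1 = -a * p * (δ^(3*(n+1)) - 1) := by
    field_simp at hrec
    linear_combination hrec + a * δ^(3*n) * hp
  rw [eq_div_iff (mul_ne_zero hδ3' hpow), hlin]
  field_simp
  linear_combination -(δ^(3*(n+1)) - 1) * hp

theorem stmt_11 (δ c a : ℂ) (hδ3 : δ^3 ≠ 1) (hδ : δ ≠ 0) (ha : a ≠ 0)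
    (hden : δ + c*a ≠ 0) (m : ℕ) (hm : 1 ≤ m) (hpow : δ^(3*m-1) + 1 ≠ 0)
    (h : moebiusH δ c (m-1) (-a / (δ * (δ + c*a))) = a) :
    1/a = -δ * (δ^(3*m) - 1) * c / ((δ^3 - 1) * (δ^(3*m-1) + 1)) :=
  stmt_11_general δ c a hδ3 ha m hm hpow h
end

section
/- Let a_0 = 0 < a_1 < ⋯ < a_N be real numbers, let 0 < d < 1, and let b = (b_1,…,b_N) satisfy a_{i−1} < b_i < a_i for each i. Define g(x) = d·∏_{i=1}^N (1 − x/a_i) and g_0(x) = ∏_{i=1}^N (1 − x/b_i). Then for each i ∈ {1,…,N} there is a unique real number y_i ∈ (a_{i−1}, b_i) with g(y_i) = g_0(y_i). -/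
open Finset

lemma aux_prod_neg (s : Finset ℕ) (f : ℕ → ℝ) (h : ∀ j ∈ s, f j < 0) :
    0 < (-1 : ℝ)^s.card * ∏ j ∈ s, f j := by
  have h1 : ∏ j ∈ s, (-f j) = (-1:ℝ)^s.card * ∏ j ∈ s, f j := by
    rw [← Finset.prod_const, ← Finset.prod_mul_distrib]
    simp
  rw [← h1]
  exact Finset.prod_pos fun j hj => neg_pos.2 (h j hj)

lemma aux_sign (N i : ℕ) (hi : 1 ≤ i) (hiN : i ≤ N) (f : ℕ → ℝ)
    (hneg : ∀ j, 1 ≤ j → j ≤ i-1 → f j < 0)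
    (hpos : ∀ j, i ≤ j → j ≤ N → 0 < f j) :
    0 < (-1:ℝ)^(i-1) * ∏ j ∈ Finset.Icc 1 N, f j := by
  have hsplit : (∏ j ∈ Finset.Ioc 0 (i-1), f j) * (∏ j ∈ Finset.Ioc (i-1) N, f j)
      = ∏ j ∈ Finset.Ioc 0 N, f j := Finset.prod_Ioc_consecutive f (Nat.zero_le _) (by omega)
  have hIcc : Finset.Icc 1 N = Finset.Ioc 0 N := by
    ext x; simp [Nat.lt_iff_add_one_le]
  have hcard : (Finset.Ioc 0 (i-1)).card = i - 1 := by simp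
  have hn : 0 < (-1:ℝ)^(i-1) * ∏ j ∈ Finset.Ioc 0 (i-1), f j := by
    have hn' := aux_prod_neg (Finset.Ioc 0 (i-1)) f (fun j hj => by
      have hj' := Finset.mem_Ioc.1 hj
      exact hneg j (by omega) (by omega))
    rwa [hcard] at hn'
  have hp : 0 < ∏ j ∈ Finset.Ioc (i-1) N, f j :=
    Finset.prod_pos fun j hj => by
      rw [Finset.mem_Ioc] at hj
      exact hpos j (by omega) (by omega)
  rw [hIcc, ← hsplit, ← mul_assoc]
  exact mul_pos hn hp

theorem stmt_14 (N : ℕ) (hN : 1 ≤ N) (a b : ℕ → ℝ) (d : ℝ)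
    (ha0 : a 0 = 0) (hmono : ∀ i, 1 ≤ i → i ≤ N → a (i-1) < a i)
    (hd0 : 0 < d) (hd1 : d < 1)
    (hb : ∀ i, 1 ≤ i → i ≤ N → a (i-1) < b i ∧ b i < a i)
    (g g0 : ℝ → ℝ)
    (hg : ∀ x, g x = d * ∏ i ∈ Finset.Icc 1 N, (1 - x / a i))
    (hg0 : ∀ x, g0 x = ∏ i ∈ Finset.Icc 1 N, (1 - x / b i)) :
    ∀ i, 1 ≤ i → i ≤ N → ∃! y : ℝ, y ∈ Set.Ioo (a (i-1)) (b i) ∧ g y = g0 y := by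
  -- monotonicity of a
  have hle : ∀ j, j ≤ N → ∀ i, i ≤ j → a i ≤ a j := by
    intro j
    induction j with
    | zero =>
      intro _ i hi
      have : i = 0 := Nat.le_zero.1 hi
      subst this; exact le_refl _
    | succ n ih =>
      intro hN' i hi
      rcases Nat.lt_or_ge i (n+1) with h | h
      · have h1 : a i ≤ a n := ih (by omega) i (by omega)
        have h2 := hmono (n+1) (by omega) hN'
        simp only [Nat.add_sub_cancel] at h2
        linarith
      · have : i = n+1 := by omega
        subst this; exact le_refl _
  have hbpos : ∀ j, 1 ≤ j → j ≤ N → 0 < b j := by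
    intro j h1 h2
    have h3 := (hb j h1 h2).1
    have h0 : a 0 ≤ a (j-1) := hle (j-1) (by omega) 0 (by omega)
    linarith
  have hapos : ∀ j, 1 ≤ j → j ≤ N → 0 < a j :=
    fun j h1 h2 => lt_trans (hbpos j h1 h2) (hb j h1 h2).2
  -- the polynomial
  set P : Polynomial ℝ :=
      Polynomial.C d * ∏ j ∈ Finset.Icc 1 N, (1 - Polynomial.C (a j)⁻¹ * Polynomial.X)
      - ∏ j ∈ Finset.Icc 1 N, (1 - Polynomial.C (b j)⁻¹ * Polynomial.X) with hP
  have heval : ∀ x, Polynomial.eval x P = g x - g0 x := by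
    intro x
    simp only [hP, hg, hg0, Polynomial.eval_sub, Polynomial.eval_mul, Polynomial.eval_C,
      Polynomial.eval_prod, Polynomial.eval_one, Polynomial.eval_X, Polynomial.eval_sub]
    have hdiv : ∀ (c : ℝ), 1 - c⁻¹ * x = 1 - x / c := fun c => by
      rw [div_eq_mul_inv, mul_comm]
    simp only [hdiv]
  have hdeg : P.natDegree ≤ N := by
    have hfac : ∀ (c : ℝ), (1 - Polynomial.C c * Polynomial.X).natDegree ≤ 1 := by
      intro c
      apply le_trans (Polynomial.natDegree_sub_le _ _)
      simp only [max_le_iff, Polynomial.natDegree_one]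
      exact ⟨Nat.zero_le _, le_trans (Polynomial.natDegree_C_mul_le _ _) Polynomial.natDegree_X_le⟩
    have hprod : ∀ (c : ℕ → ℝ),
        (∏ j ∈ Finset.Icc 1 N, (1 - Polynomial.C (c j) * Polynomial.X)).natDegree ≤ N := by
      intro c
      apply le_trans (Polynomial.natDegree_prod_le _ _)
      apply le_trans (Finset.sum_le_card_nsmul _ _ 1 (fun j _ => hfac (c j)))
      simp [Nat.card_Icc]
    rw [hP]
    apply le_trans (Polynomial.natDegree_sub_le _ _)
    simp only [max_le_iff]
    exact ⟨le_trans (Polynomial.natDegree_C_mul_le _ _) (hprod _), hprod _⟩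
  have hg0zero : g 0 = d := by rw [hg]; simp
  have hg0zero' : g0 0 = 1 := by rw [hg0]; simp
  have hPne : P ≠ 0 := by
    intro h
    have h0 := heval 0
    rw [h, hg0zero, hg0zero'] at h0
    simp at h0
    linarith
  -- sign at b j
  have signB : ∀ j, 1 ≤ j → j ≤ N → 0 < (-1:ℝ)^(j-1) * Polynomial.eval (b j) P := by
    intro j h1 h2
    have hb0 : g0 (b j) = 0 := by
      rw [hg0]
      apply Finset.prod_eq_zero (Finset.mem_Icc.2 ⟨h1, h2⟩)
      rw [div_self (ne_of_gt (hbpos j h1 h2))]; exact sub_self 1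
    have hs := aux_sign N j h1 h2 (fun k => 1 - b j / a k)
      (fun k hk1 hk2 => by
        have hak : 0 < a k := hapos k hk1 (by omega)
        have h3 : a k ≤ a (j-1) := hle (j-1) (by omega) k hk2
        have h4 : a k < b j := lt_of_le_of_lt h3 (hb j h1 h2).1
        have := (one_lt_div hak).2 h4
        linarith)
      (fun k hk1 hk2 => by
        have hak : 0 < a k := hapos k (by omega) hk2
        have h3 : a j ≤ a k := hle k hk2 j hk1
        have h4 : b j < a k := lt_of_lt_of_le (hb j h1 h2).2 h3
        have := (div_lt_one hak).2 h4
        linarith)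
    rw [heval, hb0, sub_zero, hg]
    have h3 : (-1:ℝ)^(j-1) * (d * ∏ k ∈ Finset.Icc 1 N, (1 - b j / a k))
        = d * ((-1:ℝ)^(j-1) * ∏ k ∈ Finset.Icc 1 N, (1 - b j / a k)) := by ring
    rw [h3]
    exact mul_pos hd0 hs
  -- sign at a (j-1)
  have signA : ∀ j, 1 ≤ j → j ≤ N → (-1:ℝ)^(j-1) * Polynomial.eval (a (j-1)) P < 0 := by
    intro j h1 h2
    rcases Nat.eq_or_lt_of_le h1 with h | hj2
    · subst h
      simp only [Nat.sub_self, pow_zero, one_mul]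
      rw [heval, ha0, hg0zero, hg0zero']
      linarith
    · have hj1 : 1 ≤ j - 1 := by omega
      have hga : g (a (j-1)) = 0 := by
        rw [hg, Finset.prod_eq_zero (Finset.mem_Icc.2 ⟨hj1, by omega⟩), mul_zero]
        rw [div_self (ne_of_gt (hapos (j-1) hj1 (by omega)))]; exact sub_self 1
      have hs := aux_sign N j h1 h2 (fun k => 1 - a (j-1) / b k)
        (fun k hk1 hk2 => by
          have hbk : 0 < b k := hbpos k hk1 (by omega)
          have h3 : a k ≤ a (j-1) := hle (j-1) (by omega) k hk2
          have h4 : b k < a (j-1) := lt_of_lt_of_le (hb k hk1 (by omega)).2 h3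
          have := (one_lt_div hbk).2 h4
          linarith)
        (fun k hk1 hk2 => by
          have hbk : 0 < b k := hbpos k (by omega) hk2
          have h3 : a (j-1) ≤ a (k-1) := hle (k-1) (by omega) (j-1) (by omega)
          have h4 : a (j-1) < b k := lt_of_le_of_lt h3 (hb k (by omega) hk2).1
          have := (div_lt_one hbk).2 h4
          linarith)
      rw [heval, hga, zero_sub, hg0]
      have h3 : (-1:ℝ)^(j-1) * (-∏ k ∈ Finset.Icc 1 N, (1 - a (j-1) / b k))
          = -((-1:ℝ)^(j-1) * ∏ k ∈ Finset.Icc 1 N, (1 - a (j-1) / b k)) := by ring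
      rw [h3]
      linarith
  -- existence of roots via IVT
  have hcont : Continuous fun x => Polynomial.eval x P := P.continuous
  have exist : ∀ j : ℕ, ∃ y : ℝ, 1 ≤ j → j ≤ N →
      y ∈ Set.Ioo (a (j-1)) (b j) ∧ Polynomial.eval y P = 0 := by
    intro j
    by_cases hj : 1 ≤ j ∧ j ≤ N
    · obtain ⟨h1, h2⟩ := hj
      have hA := signA j h1 h2
      have hB := signB j h1 h2
      have hab : a (j-1) ≤ b j := le_of_lt (hb j h1 h2).1
      rcases Nat.even_or_odd (j-1) with he | ho
      · have hp : (-1:ℝ)^(j-1) = 1 := he.neg_one_pow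
        rw [hp, one_mul] at hA hB
        have h0 : (0:ℝ) ∈ Set.Ioo (Polynomial.eval (a (j-1)) P) (Polynomial.eval (b j) P) :=
          ⟨hA, hB⟩
        obtain ⟨y, hy, hy0⟩ := intermediate_value_Ioo hab hcont.continuousOn h0
        exact ⟨y, fun _ _ => ⟨hy, hy0⟩⟩
      · have hp : (-1:ℝ)^(j-1) = -1 := ho.neg_one_pow
        rw [hp] at hA hB
        have hA' : 0 < Polynomial.eval (a (j-1)) P := by linarith
        have hB' : Polynomial.eval (b j) P < 0 := by linarith
        have h0 : (0:ℝ) ∈ Set.Ioo (Polynomial.eval (b j) P) (Polynomial.eval (a (j-1)) P) :=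
          ⟨hB', hA'⟩
        obtain ⟨y, hy, hy0⟩ := intermediate_value_Ioo' hab hcont.continuousOn h0
        exact ⟨y, fun _ _ => ⟨hy, hy0⟩⟩
    · exact ⟨0, fun ha' hb' => absurd ⟨ha', hb'⟩ hj⟩
  choose r hr using exist
  intro i hi1 hiN
  obtain ⟨hri, hri0⟩ := hr i hi1 hiN
  refine ⟨r i, ⟨hri, by have := heval (r i); rw [hri0] at this; linarith⟩, ?_⟩
  rintro y' ⟨hy', hgy'⟩
  by_contra hne
  have hy'0 : Polynomial.eval y' P = 0 := by rw [heval, hgy', sub_self]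
  set q : ℕ → ℝ := fun j => if j = i then y' else r j with hq
  have qmem : ∀ j, 1 ≤ j → j ≤ N → q j ∈ Set.Ioo (a (j-1)) (b j) := by
    intro j h1 h2
    by_cases h : j = i
    · subst h; simpa [hq] using hy'
    · simp only [hq, if_neg h]; exact (hr j h1 h2).1
  have qroot : ∀ j, 1 ≤ j → j ≤ N → Polynomial.eval (q j) P = 0 := by
    intro j h1 h2
    by_cases h : j = i
    · subst h; simpa [hq] using hy'0
    · simp only [hq, if_neg h]; exact (hr j h1 h2).2
  have hsep : ∀ (u : ℕ → ℝ) (v : ℕ → ℝ), (∀ j, 1 ≤ j → j ≤ N → u j ∈ Set.Ioo (a (j-1)) (b j)) →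
      (∀ j, 1 ≤ j → j ≤ N → v j ∈ Set.Ioo (a (j-1)) (b j)) →
      ∀ j k, 1 ≤ j → j ≤ N → 1 ≤ k → k ≤ N → j < k → u j < v k := by
    intro u v hu hv j k h1 h2 h3 h4 hjk
    have hqj := hu j h1 h2
    have hqk := hv k h3 h4
    have h5 : b j ≤ a (k-1) := le_trans (le_of_lt (hb j h1 h2).2) (hle (k-1) (by omega) j (by omega))
    exact lt_trans (lt_of_lt_of_le hqj.2 h5) hqk.1
  have hinj : Set.InjOn q (Finset.Icc 1 N : Finset ℕ) := by
    intro x hx y hy hxy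
    simp only [Finset.coe_Icc, Set.mem_Icc] at hx hy
    rcases lt_trichotomy x y with h | h | h
    · exact absurd hxy (ne_of_lt (hsep q q qmem qmem x y hx.1 hx.2 hy.1 hy.2 h))
    · exact h
    · exact absurd hxy.symm (ne_of_lt (hsep q q qmem qmem y x hy.1 hy.2 hx.1 hx.2 h))
  have rmem : ∀ j, 1 ≤ j → j ≤ N → r j ∈ Set.Ioo (a (j-1)) (b j) := fun j h1 h2 => (hr j h1 h2).1
  have hymem : r i ∉ (Finset.Icc 1 N).image q := by
    intro h
    obtain ⟨j, hj, hqj⟩ := Finset.mem_image.1 h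
    rw [Finset.mem_Icc] at hj
    by_cases hji : j = i
    · subst hji
      simp only [hq, if_pos rfl] at hqj
      exact hne hqj
    · rcases lt_or_gt_of_ne hji with h' | h'
      · exact absurd hqj (ne_of_lt (hsep q r qmem rmem j i hj.1 hj.2 hi1 hiN h'))
      · exact absurd hqj.symm (ne_of_lt (hsep r q rmem qmem i j hi1 hiN hj.1 hj.2 h'))
  have hZ : (insert (r i) ((Finset.Icc 1 N).image q)) ⊆ P.roots.toFinset := by
    intro x hx
    rw [Multiset.mem_toFinset, Polynomial.mem_roots']
    refine ⟨hPne, ?_⟩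
    rcases Finset.mem_insert.1 hx with rfl | hx'
    · exact hri0
    · obtain ⟨j, hj, rfl⟩ := Finset.mem_image.1 hx'
      rw [Finset.mem_Icc] at hj
      exact qroot j hj.1 hj.2
  have hcard : N + 1 ≤ (insert (r i) ((Finset.Icc 1 N).image q)).card := by
    rw [Finset.card_insert_of_notMem hymem, Finset.card_image_of_injOn hinj, Nat.card_Icc]
    omega
  have hle1 : (insert (r i) ((Finset.Icc 1 N).image q)).card ≤ Multiset.card P.roots :=
    le_trans (Finset.card_le_card hZ) (Multiset.toFinset_card_le _)
  have hle2 : Multiset.card P.roots ≤ N := le_trans (Polynomial.card_roots' P) hdeg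
  omega
end

section
/- Let δ be a complex number on the unit circle, let β be a real number, and let t be a root of t^2 + (2−β)t + 1 = 0. Then 2 + δt^2 + (δt^2)^{−1} lies in the real interval [0,4] if and only if β ∈ [0,4]. -/
lemma key_abs_one (z : ℂ) (hz : z ≠ 0) (s : ℝ) (hs : s^2 ≤ 4)
    (h : z + z⁻¹ = (s : ℂ)) : ‖z‖ = 1 := by
  have h2 : z^2 + 1 = (s : ℂ) * z := by
    field_simp at h
    linear_combination h
  have hc : (starRingEnd ℂ z)^2 + 1 = (s : ℂ) * (starRingEnd ℂ z) := by
    have := congrArg (starRingEnd ℂ) h2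
    simpa using this
  have hfac : (starRingEnd ℂ z - z) * (starRingEnd ℂ z - ((s : ℂ) - z)) = 0 := by
    linear_combination hc - h2
  rcases mul_eq_zero.mp hfac with hA | hB
  · -- conj z = z, so z is real
    have hzr : starRingEnd ℂ z = z := by linear_combination hA
    have hre : z = (z.re : ℂ) := by
      rw [Complex.conj_eq_iff_re] at hzr
      exact hzr.symm
    set x := z.re with hx
    have hx2 : x^2 + 1 = s * x := by
      have := h2
      rw [hre] at this
      exact_mod_cast this
    have hx1 : x^2 = 1 := by nlinarith [sq_nonneg (2*x - s)]
    rw [hre, Complex.norm_real, Real.norm_eq_abs]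
    have : |x|^2 = 1 := by rw [sq_abs]; exact hx1
    nlinarith [abs_nonneg x]
  · have hzc : z * starRingEnd ℂ z = 1 := by linear_combination z * hB - h2
    rw [Complex.mul_conj] at hzc
    have hn : Complex.normSq z = 1 := by exact_mod_cast hzc
    have := Complex.sq_norm z
    rw [hn] at this
    nlinarith [norm_nonneg z]

theorem stmt_18 (δ : ℂ) (hδ : ‖δ‖ = 1) (β : ℝ) (t : ℂ)
    (ht : t^2 + (2 - (β : ℂ)) * t + 1 = 0) :
    (∃ r : ℝ, 2 + δ * t^2 + (δ * t^2)⁻¹ = (r : ℂ) ∧ r ∈ Set.Icc (0:ℝ) 4) ↔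
      β ∈ Set.Icc (0:ℝ) 4 := by
  have hδ0 : δ ≠ 0 := by
    intro h; rw [h] at hδ; simp at hδ
  have ht0 : t ≠ 0 := by
    intro h; rw [h] at ht; simp at ht
  have hz0 : δ * t^2 ≠ 0 := by
    exact mul_ne_zero hδ0 (pow_ne_zero 2 ht0)
  have hsum : t + t⁻¹ = ((β : ℂ) - 2) := by
    field_simp
    linear_combination ht
  constructor
  · rintro ⟨r, hr, hr0, hr4⟩
    -- z + z⁻¹ = r - 2
    have hzsum : δ * t^2 + (δ * t^2)⁻¹ = (((r - 2 : ℝ)) : ℂ) := by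
      push_cast
      linear_combination hr
    have hs : (r - 2)^2 ≤ 4 := by nlinarith
    have habsz : ‖δ * t^2‖ = 1 := key_abs_one _ hz0 _ hs hzsum
    have habst : ‖t‖ = 1 := by
      rw [norm_mul, norm_pow, hδ, one_mul] at habsz
      nlinarith [norm_nonneg t]
    -- t⁻¹ = conj t
    have hinv : t⁻¹ = starRingEnd ℂ t := by
      rw [Complex.inv_def, Complex.normSq_eq_norm_sq, habst]
      simp
    have hβ : (β : ℂ) = 2 + 2 * (t.re : ℂ) := by
      have hts := hsum
      rw [hinv] at hts
      have h2 := Complex.add_conj t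
      push_cast at h2
      linear_combination h2 - hts
    have hβr : β = 2 + 2 * t.re := by exact_mod_cast hβ
    have hre : |t.re| ≤ 1 := by
      have := Complex.abs_re_le_norm t
      rwa [habst] at this
    rw [abs_le] at hre
    constructor <;> [nlinarith; nlinarith]
  · rintro ⟨hβ0, hβ4⟩
    have hs : (β - 2)^2 ≤ 4 := by nlinarith
    have habst : ‖t‖ = 1 := by
      have := key_abs_one t ht0 (β - 2) hs (by push_cast; linear_combination hsum)
      exact this
    have habsz : ‖δ * t^2‖ = 1 := by
      rw [norm_mul, norm_pow, hδ, habst]; ring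
    have hinv : (δ * t^2)⁻¹ = starRingEnd ℂ (δ * t^2) := by
      rw [Complex.inv_def, Complex.normSq_eq_norm_sq, habsz]
      simp
    refine ⟨2 + 2 * (δ * t^2).re, ?_, ?_, ?_⟩
    · rw [hinv]
      have h2 := Complex.add_conj (δ * t^2)
      push_cast at h2 ⊢
      linear_combination h2
    · have := Complex.abs_re_le_norm (δ * t^2)
      rw [habsz, abs_le] at this
      nlinarith [this.1]
    · have := Complex.abs_re_le_norm (δ * t^2)
      rw [habsz, abs_le] at this
      nlinarith [this.2]
end
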